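/- Let φ : ℝ⁴ → ℝ be smooth, with coordinates (t, x, y, z); latin indices a, b range over (t, x, y) with the 3-dimensional Minkowski metric diag(−1, 1, 1) used to raise them, the summation convention applies, and φ_z := ∂_zφ. Define L[φ] = −½ φ (φ^{,a}φ_{,a} + φ_z²) ∂_z²φ − ½ φ (φ^{,a}φ_{,a} + φ_z²) φ_{,b}^{,b}, L′[φ] = (1/6) φ_z⁴ + ½ (φ^{,a}φ_{,a} − φ φ_{,a}^{,a}) φ_z² + φ φ^{,a} (∂_z∂_aφ) φ_z − ½ φ φ^{,a}φ_{,a} φ_{,b}^{,b}, and F[φ] = ½ φ ( φ^{,a}φ_{,a} φ_z + (1/3) φ_z³ ). Then, as smooth functions on ℝ⁴, L′[φ] = L[φ] + ∂_z( F[φ] ) for every smooth φ; in particular L′ is of first order in z while L is of second order in z, and L and L′ have identical Euler–Lagrange expressions. -/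

import Mathlib

open scoped BigOperators

noncomputable section

/-- Partial derivative of a function on `ℝ⁴` in the coordinate direction `μ`. -/
def pd (μ : Fin 4) (f : (Fin 4 → ℝ) → ℝ) : (Fin 4 → ℝ) → ℝ :=
  fun x => fderiv ℝ f x (Pi.single μ 1)

/-- The evolutionary coordinate `z` (the last of `(t,x,y,z)`). -/
def zc : Fin 4 := Fin.last 3

/-- The 3-dimensional Minkowski metric `diag(−1,1,1)` on the `(t,x,y)` directions. -/
def η3 : Fin 3 → ℝ := fun a => if a = 0 then -1 else 1

/-- The second-order jet space of a scalar field on `ℝ⁴`. -/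
abbrev Jet2 := ℝ × (Fin 4 → ℝ) × (Fin 4 → Fin 4 → ℝ)

/-- The second-order jet prolongation of a scalar field `φ`. -/
def jet2 (φ : (Fin 4 → ℝ) → ℝ) (x : Fin 4 → ℝ) : Jet2 :=
  (φ x, fun μ => pd μ φ x, fun μ ν => pd μ (pd ν φ) x)

/-- Symmetrized direction for `∂/∂φ_{,μν}`. -/
def esym (μ ν : Fin 4) : Fin 4 → Fin 4 → ℝ :=
  fun ρ σ => (1 / 2 : ℝ) *
    ((if ρ = μ ∧ σ = ν then (1 : ℝ) else 0) + (if ρ = ν ∧ σ = μ then (1 : ℝ) else 0))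

/-- Euler–Lagrange expression of a second-order scalar Lagrangian along `φ`. -/
def ELscalar (Λ : Jet2 → ℝ) (φ : (Fin 4 → ℝ) → ℝ) : (Fin 4 → ℝ) → ℝ :=
  fun x =>
    fderiv ℝ Λ (jet2 φ x) ((1 : ℝ), 0, 0)
    - (∑ μ : Fin 4, pd μ (fun y => fderiv ℝ Λ (jet2 φ y) ((0 : ℝ), Pi.single μ 1, 0)) x)
    + ∑ μ : Fin 4, ∑ ν : Fin 4,
        pd μ (pd ν (fun y => fderiv ℝ Λ (jet2 φ y) ((0 : ℝ), 0, esym μ ν))) x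

/-- `φ^{,a}φ_{,a}` (3-dimensional contraction of first derivatives). -/
def S3 (w : Jet2) : ℝ := ∑ a : Fin 3, η3 a * w.2.1 a.castSucc * w.2.1 a.castSucc

/-- `φ_{,b}^{,b}` (3-dimensional wave operator `−∂_t² + ∂_x² + ∂_y²`). -/
def W3 (w : Jet2) : ℝ := ∑ a : Fin 3, η3 a * w.2.2 a.castSucc a.castSucc

/-- The split form of the Lagrangian `−½ φ (∂φ)² □φ`:
`L = −½ φ (φ^{,a}φ_{,a} + φ_z²) φ_{,zz} − ½ φ (φ^{,a}φ_{,a} + φ_z²) φ_{,b}^{,b}`. -/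
def Lsplit : Jet2 → ℝ :=
  fun w => -(1 / 2 : ℝ) * w.1 * (S3 w + (w.2.1 zc) ^ 2) * w.2.2 zc zc
    - (1 / 2 : ℝ) * w.1 * (S3 w + (w.2.1 zc) ^ 2) * W3 w

/-- The reduced Lagrangian
`L′ = (1/6)φ_z⁴ + ½(φ^{,a}φ_{,a} − φφ_{,a}^{,a})φ_z² + φφ^{,a}φ_{,za}φ_z
      − ½φφ^{,a}φ_{,a}φ_{,b}^{,b}`. -/
def Lred : Jet2 → ℝ :=
  fun w => (1 / 6 : ℝ) * (w.2.1 zc) ^ 4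
    + (1 / 2 : ℝ) * (S3 w - w.1 * W3 w) * (w.2.1 zc) ^ 2
    + w.1 * (∑ a : Fin 3, η3 a * w.2.1 a.castSucc * w.2.2 a.castSucc zc) * w.2.1 zc
    - (1 / 2 : ℝ) * w.1 * S3 w * W3 w

/-- The generating function `F = ½ φ (φ^{,a}φ_{,a} φ_z + (1/3) φ_z³)`. -/
def Fgen : Jet2 → ℝ :=
  fun w => (1 / 2 : ℝ) * w.1 * (S3 w * w.2.1 zc + (1 / 3 : ℝ) * (w.2.1 zc) ^ 3)

/-!
`L′ − L` equals the total derivative `D_z F = (∂F/∂φ) φ_{,z} + (∂F/∂φ_{,μ}) φ_{,μz}` already as a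
polynomial identity on 2-jets, and along the prolongation of `φ` the chain rule turns `D_z F` into
`∂_z(F[φ])`. The Euler–Lagrange operator is additive and annihilates the total derivative of any
smooth first-order Lagrangian `F`: the two terms carrying `∂F/∂φ` cancel, and the second derivatives
of `(∂F/∂φ_{,μ})[φ]` produced by `∂/∂φ_{,μ}` and by `∂/∂φ_{,μν}` cancel by the symmetry of second
derivatives.
-/

open scoped ContDiff

theorem ContDiff.pd {f : (Fin 4 → ℝ) → ℝ} (hf : ContDiff ℝ ∞ f) (μ : Fin 4) :
    ContDiff ℝ ∞ (pd μ f) :=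
  (hf.fderiv_right (m := ∞) le_rfl).clm_apply contDiff_const

theorem pd_comm {f : (Fin 4 → ℝ) → ℝ} (hf : ContDiff ℝ 2 f) (μ ν : Fin 4) (x : Fin 4 → ℝ) :
    pd μ (pd ν f) x = pd ν (pd μ f) x := by
  have hd : Differentiable ℝ (fderiv ℝ f) :=
    (hf.fderiv_right (m := 1) le_rfl).differentiable one_ne_zero
  have hsecond : ∀ ρ σ : Fin 4, pd ρ (pd σ f) x
      = fderiv ℝ (fderiv ℝ f) x (Pi.single ρ 1) (Pi.single σ 1) := fun ρ σ => by
    change fderiv ℝ (fun y => fderiv ℝ f y (Pi.single σ 1)) x (Pi.single ρ 1) = _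
    rw [fderiv_clm_apply (hd x) (differentiableAt_const _)]
    simp
  rw [hsecond, hsecond]
  exact hf.contDiffAt.isSymmSndFDerivAt (by simp) _ _

@[simp]
theorem pd_const (μ : Fin 4) (c : ℝ) : pd μ (fun _ => c) = 0 := by
  ext
  simp [pd]

theorem pd_add {f g : (Fin 4 → ℝ) → ℝ} (hf : Differentiable ℝ f) (hg : Differentiable ℝ g)
    (μ : Fin 4) : pd μ (fun y => f y + g y) = fun y => pd μ f y + pd μ g y := by
  ext y
  simp only [pd, fderiv_fun_add (hf y) (hg y), add_apply]

theorem pd_add_mul {f g : (Fin 4 → ℝ) → ℝ} (hf : Differentiable ℝ f) (hg : Differentiable ℝ g)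
    (a b : ℝ) (μ : Fin 4) :
    pd μ (fun y => a * f y + b * g y) = fun y => a * pd μ f y + b * pd μ g y := by
  ext y
  simp only [pd, fderiv_fun_add ((hf y).const_mul a) ((hg y).const_mul b),
    fderiv_const_mul (hf y), fderiv_const_mul (hg y), add_apply, smul_apply, smul_eq_mul]

theorem contDiff_fderiv_comp_apply {D E : Type*} [NormedAddCommGroup D] [NormedSpace ℝ D]
    [NormedAddCommGroup E] [NormedSpace ℝ E] {Λ : E → ℝ} (hΛ : ContDiff ℝ ∞ Λ) {J : D → E}
    (hJ : ContDiff ℝ ∞ J) (v : E) : ContDiff ℝ ∞ (fun y => fderiv ℝ Λ (J y) v) :=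
  ((hΛ.fderiv_right (m := ∞) le_rfl).comp hJ).clm_apply contDiff_const

abbrev Jet1 := ℝ × (Fin 4 → ℝ)

def jet1 (φ : (Fin 4 → ℝ) → ℝ) (x : Fin 4 → ℝ) : Jet1 :=
  (φ x, fun μ => pd μ φ x)

theorem ContDiff.jet1 {φ : (Fin 4 → ℝ) → ℝ} (hφ : ContDiff ℝ ∞ φ) : ContDiff ℝ ∞ (jet1 φ) :=
  hφ.prodMk (contDiff_pi.2 fun μ => hφ.pd μ)

theorem ContDiff.jet2 {φ : (Fin 4 → ℝ) → ℝ} (hφ : ContDiff ℝ ∞ φ) : ContDiff ℝ ∞ (jet2 φ) :=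
  hφ.prodMk ((contDiff_pi.2 fun μ => hφ.pd μ).prodMk
    (contDiff_pi.2 fun μ => contDiff_pi.2 fun ν => (hφ.pd ν).pd μ))

theorem pd_comp_jet1 {φ : (Fin 4 → ℝ) → ℝ} (hφ : ContDiff ℝ ∞ φ) {H : Jet1 → ℝ}
    (hH : Differentiable ℝ H) (ν : Fin 4) (x : Fin 4 → ℝ) :
    pd ν (fun y => H (jet1 φ y)) x =
      fderiv ℝ H (jet1 φ x) (pd ν φ x, fun ρ => pd ν (pd ρ φ) x) := by
  have hd : ∀ f : (Fin 4 → ℝ) → ℝ, ContDiff ℝ ∞ f → HasFDerivAt f (fderiv ℝ f x) x :=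
    fun f hf => (hf.differentiable (by simp) x).hasFDerivAt
  have hj : HasFDerivAt (jet1 φ)
      ((fderiv ℝ φ x).prod (ContinuousLinearMap.pi fun ρ => fderiv ℝ (pd ρ φ) x)) x :=
    (hd φ hφ).prodMk (hasFDerivAt_pi.2 fun ρ => hd _ (hφ.pd ρ))
  rw [pd, fderiv_fun_comp x (hH _) hj.differentiableAt, hj.fderiv]
  rfl

theorem ELscalar_add {Λ Λ' : Jet2 → ℝ} (hΛ : ContDiff ℝ ∞ Λ) (hΛ' : ContDiff ℝ ∞ Λ')
    {φ : (Fin 4 → ℝ) → ℝ} (hφ : ContDiff ℝ ∞ φ) (x : Fin 4 → ℝ) :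
    ELscalar (Λ + Λ') φ x = ELscalar Λ φ x + ELscalar Λ' φ x := by
  have hd : ∀ {Λ : Jet2 → ℝ}, ContDiff ℝ ∞ Λ → ∀ v,
      Differentiable ℝ (fun y => fderiv ℝ Λ (jet2 φ y) v) := fun hΛ v =>
    (contDiff_fderiv_comp_apply hΛ hφ.jet2 v).differentiable (by simp)
  have hd' : ∀ {Λ : Jet2 → ℝ}, ContDiff ℝ ∞ Λ → ∀ v μ,
      Differentiable ℝ (pd μ (fun y => fderiv ℝ Λ (jet2 φ y) v)) := fun hΛ v μ =>
    ((contDiff_fderiv_comp_apply hΛ hφ.jet2 v).pd μ).differentiable (by simp)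
  have hsum : ∀ w, fderiv ℝ (Λ + Λ') w = fderiv ℝ Λ w + fderiv ℝ Λ' w := fun w =>
    fderiv_add (hΛ.differentiable (by simp) w) (hΛ'.differentiable (by simp) w)
  simp only [ELscalar, hsum, add_apply, pd_add (hd hΛ _) (hd hΛ' _),
    pd_add (hd' hΛ _ _) (hd' hΛ' _ _), Finset.sum_add_distrib]
  ring

def totalDeriv (ν : Fin 4) (F : Jet1 → ℝ) (w : Jet2) : ℝ :=
  fderiv ℝ F (w.1, w.2.1) (w.2.1 ν, fun μ => w.2.2 μ ν)

def truncCLM : Jet2 →L[ℝ] Jet1 :=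
  (ContinuousLinearMap.fst ℝ ℝ _).prod
    ((ContinuousLinearMap.fst ℝ _ _).comp (ContinuousLinearMap.snd ℝ ℝ _))

def shiftCLM (ν : Fin 4) : Jet2 →L[ℝ] Jet1 :=
  LinearMap.toContinuousLinearMap
    { toFun := fun w => (w.2.1 ν, fun μ => w.2.2 μ ν)
      map_add' := fun _ _ => rfl
      map_smul' := fun _ _ => rfl }

section TotalDerivative

variable {F : Jet1 → ℝ} {φ : (Fin 4 → ℝ) → ℝ}

theorem ContDiff.totalDeriv (hF : ContDiff ℝ ∞ F) (ν : Fin 4) :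
    ContDiff ℝ ∞ (totalDeriv ν F) :=
  ((hF.fderiv_right (m := ∞) le_rfl).comp truncCLM.contDiff).clm_apply (shiftCLM ν).contDiff

theorem fderiv_totalDeriv (hF : ContDiff ℝ ∞ F) (ν : Fin 4) (w v : Jet2) :
    fderiv ℝ (totalDeriv ν F) w v =
      fderiv ℝ (fderiv ℝ F) (w.1, w.2.1) (v.1, v.2.1) (w.2.1 ν, fun μ => w.2.2 μ ν)
        + fderiv ℝ F (w.1, w.2.1) (v.2.1 ν, fun μ => v.2.2 μ ν) := by
  have hF2 : Differentiable ℝ (fderiv ℝ F) :=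
    (hF.fderiv_right (m := ∞) le_rfl).differentiable (by simp)
  have h : HasFDerivAt (totalDeriv ν F) _ w :=
    ((hF2 _).hasFDerivAt.comp w truncCLM.hasFDerivAt).clm_apply (shiftCLM ν).hasFDerivAt
  rw [h.fderiv, add_comm]
  rfl

theorem pd_comp_jet1_eq_totalDeriv (hF : ContDiff ℝ ∞ F) (hφ : ContDiff ℝ ∞ φ) (ν : Fin 4)
    (x : Fin 4 → ℝ) : pd ν (fun y => F (jet1 φ y)) x = totalDeriv ν F (jet2 φ x) := by
  rw [pd_comp_jet1 hφ (hF.differentiable (by simp)), totalDeriv]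
  congr 2
  ext μ
  exact pd_comm (hφ.of_le ENat.LEInfty.out) ν μ x

theorem fderiv_totalDeriv_jet2 (hF : ContDiff ℝ ∞ F) (hφ : ContDiff ℝ ∞ φ) (ν : Fin 4)
    (y : Fin 4 → ℝ) (v : Jet2) :
    fderiv ℝ (totalDeriv ν F) (jet2 φ y) v =
      pd ν (fun y' => fderiv ℝ F (jet1 φ y') (v.1, v.2.1)) y
        + fderiv ℝ F (jet1 φ y) (v.2.1 ν, fun μ => v.2.2 μ ν) := by
  have hF2 : Differentiable ℝ (fderiv ℝ F) :=
    (hF.fderiv_right (m := ∞) le_rfl).differentiable (by simp)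
  have hsymm : IsSymmSndFDerivAt ℝ F (jet1 φ y) :=
    hF.contDiffAt.isSymmSndFDerivAt (by simp [← WithTop.coe_ofNat])
  rw [fderiv_totalDeriv hF, pd_comp_jet1 hφ (fun p => (hF2 p).clm_apply (differentiableAt_const _)),
    fderiv_clm_apply (hF2 _) (differentiableAt_const _)]
  simp only [fderiv_fun_const, Pi.zero_apply, ContinuousLinearMap.comp_zero, zero_add,
    ContinuousLinearMap.flip_apply, hsymm (pd ν φ y, _)]
  congr 4
  ext μ
  exact pd_comm (hφ.of_le ENat.LEInfty.out) μ ν y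

theorem apply_esym_column (ℓ : Jet1 →L[ℝ] ℝ) (μ ν ν' : Fin 4) :
    ℓ (0, fun ρ => esym μ ν' ρ ν) =
      (Pi.single ν' 1 : Fin 4 → ℝ) ν / 2 * ℓ (0, Pi.single μ 1)
        + (Pi.single μ 1 : Fin 4 → ℝ) ν / 2 * ℓ (0, Pi.single ν' 1) := by
  simp only [← smul_eq_mul, ← map_smul, ← map_add]
  congr 1
  ext ρ
  · simp
  · simp only [esym, Pi.single_apply, Prod.smul_mk, Prod.snd_add, Pi.add_apply, Pi.smul_apply,
      smul_eq_mul, ite_and]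
    split_ifs <;> ring

theorem ELscalar_totalDeriv (hF : ContDiff ℝ ∞ F) (hφ : ContDiff ℝ ∞ φ) (ν : Fin 4)
    (x : Fin 4 → ℝ) : ELscalar (totalDeriv ν F) φ x = 0 := by
  set A : Jet1 → (Fin 4 → ℝ) → ℝ := fun u y => fderiv ℝ F (jet1 φ y) u
  have hA : ∀ u, ContDiff ℝ ∞ (A u) := contDiff_fderiv_comp_apply hF hφ.jet1
  have hA1 : ∀ u, Differentiable ℝ (A u) := fun u => (hA u).differentiable (by simp)
  have hpA1 : ∀ u μ, Differentiable ℝ (pd μ (A u)) :=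
    fun u μ => ((hA u).pd μ).differentiable (by simp)
  have hvalue : fderiv ℝ (totalDeriv ν F) (jet2 φ x) (1, 0, 0) = pd ν (A (1, 0)) x := by
    simp [fderiv_totalDeriv_jet2 hF hφ, A, show ((0 : ℝ), fun _ : Fin 4 => (0 : ℝ)) = 0 from rfl]
  have hfirst : ∀ μ, (fun y => fderiv ℝ (totalDeriv ν F) (jet2 φ y) (0, Pi.single μ 1, 0)) =
      fun y => 1 * pd ν (A (0, Pi.single μ 1)) y + (Pi.single μ 1 : Fin 4 → ℝ) ν * A (1, 0) y := by
    intro μ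
    ext y
    have hc : ((Pi.single μ 1 : Fin 4 → ℝ) ν, fun _ : Fin 4 => (0 : ℝ)) =
        (Pi.single μ 1 : Fin 4 → ℝ) ν • ((1 : ℝ), (0 : Fin 4 → ℝ)) := by ext <;> simp
    rw [fderiv_totalDeriv_jet2 hF hφ, one_mul]
    congr 1
    exact (congrArg (fderiv ℝ F (jet1 φ y)) hc).trans (map_smul _ _ _)
  have hsecond : ∀ μ ν', (fun y => fderiv ℝ (totalDeriv ν F) (jet2 φ y) (0, 0, esym μ ν')) =
      fun y => (Pi.single ν' 1 : Fin 4 → ℝ) ν / 2 * A (0, Pi.single μ 1) y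
        + (Pi.single μ 1 : Fin 4 → ℝ) ν / 2 * A (0, Pi.single ν' 1) y := by
    intro μ ν'
    ext y
    simp [fderiv_totalDeriv_jet2 hF hφ, apply_esym_column, Prod.mk_zero_zero, A]
  simp only [ELscalar, hvalue, hfirst, hsecond, pd_add_mul (hpA1 _ _) (hA1 _),
    pd_add_mul (hA1 _) (hA1 _), pd_add_mul (hpA1 _ _) (hpA1 _ _)]
  simp only [Pi.single_apply, ite_div, ite_mul, zero_div, zero_mul, Finset.sum_ite_eq,
    Finset.mem_univ, if_true, Finset.sum_add_distrib, Finset.sum_ite_irrel, Finset.sum_const_zero]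
  simp only [pd_comm ((hA _).of_le ENat.LEInfty.out) ν, one_mul, ← Finset.mul_sum]
  ring

end TotalDerivative

def Fgen1 (p : Jet1) : ℝ := Fgen (p.1, p.2, 0)

theorem contDiff_Fgen1 : ContDiff ℝ ∞ Fgen1 := by
  unfold Fgen1 Fgen S3
  fun_prop

theorem contDiff_Lsplit : ContDiff ℝ ∞ Lsplit := by
  unfold Lsplit S3 W3
  fun_prop

theorem fderiv_Fgen1 (p d : Jet1) :
    fderiv ℝ Fgen1 p d =
      d.1 / 2 * ((∑ a : Fin 3, η3 a * p.2 a.castSucc ^ 2) * p.2 zc + p.2 zc ^ 3 / 3)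
        + p.1 / 2 * ((∑ a : Fin 3, 2 * η3 a * p.2 a.castSucc * d.2 a.castSucc) * p.2 zc
          + (∑ a : Fin 3, η3 a * p.2 a.castSucc ^ 2) * d.2 zc + p.2 zc ^ 2 * d.2 zc) := by
  have hcoord : ∀ μ : Fin 4, HasFDerivAt (fun p : Jet1 => p.2 μ)
      ((ContinuousLinearMap.proj μ).comp (ContinuousLinearMap.snd ℝ ℝ (Fin 4 → ℝ))) p :=
    fun μ => ((ContinuousLinearMap.proj μ).comp
      (ContinuousLinearMap.snd ℝ ℝ (Fin 4 → ℝ))).hasFDerivAt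
  have h : HasFDerivAt Fgen1 _ p := ((hasFDerivAt_fst.const_mul (1 / 2 : ℝ)).mul
    (((HasFDerivAt.fun_sum fun a _ => ((hcoord a.castSucc).const_mul (η3 a)).mul
      (hcoord a.castSucc)).mul (hcoord zc)).add (((hcoord zc).pow 3).const_mul (1 / 3 : ℝ))))
  rw [h.fderiv]
  simp [S3, Fin.sum_univ_three]
  ring

theorem Lred_eq_Lsplit_add_totalDeriv : Lred = Lsplit + totalDeriv zc Fgen1 := by
  ext w
  simp only [Pi.add_apply, totalDeriv, fderiv_Fgen1]
  simp only [Lred, Lsplit, S3, W3, Fin.sum_univ_three]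
  ring

theorem Lred_eq_of_eq_off_zz (w w' : Jet2) (h₀ : w.1 = w'.1) (h₁ : w.2.1 = w'.2.1)
    (h₂ : ∀ μ ν : Fin 4, ¬(μ = zc ∧ ν = zc) → w.2.2 μ ν = w'.2.2 μ ν) : Lred w = Lred w' := by
  have hdiag : ∀ a : Fin 3, w.2.2 a.castSucc a.castSucc = w'.2.2 a.castSucc a.castSucc :=
    fun a => h₂ _ _ fun h => (Fin.castSucc_lt_last a).ne h.1
  have hmixed : ∀ a : Fin 3, w.2.2 a.castSucc zc = w'.2.2 a.castSucc zc :=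
    fun a => h₂ _ _ fun h => (Fin.castSucc_lt_last a).ne h.1
  simp only [Lred, S3, W3, h₀, h₁, hdiag, hmixed]

/-- **Reduction of the evolutionary order by a total `z`-derivative** (Section 3.6).
For every smooth `φ : ℝ⁴ → ℝ`, `L′[φ] = L[φ] + ∂_z(F[φ])` as smooth functions on `ℝ⁴`;
in particular `L′` is of first order in `z` (it does not depend on the variable
`φ_{,zz}`) while `L` is of second order in `z`, and `L` and `L′` have identical
Euler–Lagrange expressions. -/
theorem reduced_lagrangian_differs_by_total_derivative
    (φ : (Fin 4 → ℝ) → ℝ) (hφ : ContDiff ℝ (⊤ : ℕ∞) φ) :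
    (∀ x : Fin 4 → ℝ,
      Lred (jet2 φ x) = Lsplit (jet2 φ x) + pd zc (fun y => Fgen (jet2 φ y)) x)
    ∧ (∀ w w' : Jet2, w.1 = w'.1 → w.2.1 = w'.2.1 →
        (∀ μ ν : Fin 4, ¬(μ = zc ∧ ν = zc) → w.2.2 μ ν = w'.2.2 μ ν) →
        Lred w = Lred w')
    ∧ (∀ x : Fin 4 → ℝ, ELscalar Lsplit φ x = ELscalar Lred φ x) := by
  refine ⟨fun x => ?_, Lred_eq_of_eq_off_zz, fun x => ?_⟩
  · rw [Lred_eq_Lsplit_add_totalDeriv, Pi.add_apply,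
      ← pd_comp_jet1_eq_totalDeriv contDiff_Fgen1 hφ]
    rfl
  · rw [Lred_eq_Lsplit_add_totalDeriv,
      ELscalar_add contDiff_Lsplit (contDiff_Fgen1.totalDeriv zc) hφ,
      ELscalar_totalDeriv contDiff_Fgen1 hφ, add_zero]
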